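/- arXiv:1801.09181 — 2 statements merged into one kernel-verified Lean document; each statement's English description precedes it below -/
import Mathlib

section
/- For any complex number z with cos(z) ≠ 0 and any odd positive integer N, cos(Nz)/cos(z) = (-1)^((N-1)/2) · Σ'' i^j exp(-ijz), where the sum Σ'' is over j = -(N-1), -(N-3), ..., N-3, N-1. -/
/-! With `x = i e^{-iz}` the summand is `x ^ j`. Multiplying the sum by `x - x⁻¹ = 2 i cos z`
telescopes it to `x ^ N - x ^ (-N)`, which for `N = 2m + 1` equals `2 i (-1)^m cos (N z)`. -/

open Complex Finset

theorem sub_inv_mul_sum_zpow {K : Type*} [DivisionRing K] {x : K} (hx : x ≠ 0) (N : ℕ) :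
    (x - x⁻¹) * ∑ k ∈ range N, x ^ (2 * (k : ℤ) - ((N : ℤ) - 1)) = x ^ (N : ℤ) - x ^ (-(N : ℤ)) := by
  have step (k : ℕ) : (x - x⁻¹) * x ^ (2 * (k : ℤ) - ((N : ℤ) - 1)) =
      x ^ (2 * ((k + 1 : ℕ) : ℤ) - N) - x ^ (2 * (k : ℤ) - N) := by
    rw [sub_mul, ← zpow_one_add₀ hx, ← zpow_neg_one, ← zpow_add₀ hx]
    push_cast
    ring_nf
  rw [mul_sum, sum_congr rfl fun k _ => step k, sum_range_sub (fun k : ℕ => x ^ (2 * (k : ℤ) - N))]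
  push_cast
  ring_nf

theorem I_mul_exp_zpow (z : ℂ) (j : ℤ) :
    (I * exp (-(I * z))) ^ j = I ^ j * exp (-(I * (j * z))) := by
  rw [mul_zpow, ← exp_int_mul]
  ring_nf

theorem I_mul_exp_zpow_sub_zpow_neg (z : ℂ) (m : ℕ) :
    (I * exp (-(I * z))) ^ ((2 * m + 1 : ℕ) : ℤ) - (I * exp (-(I * z))) ^ (-((2 * m + 1 : ℕ) : ℤ)) =
      2 * I * (-1) ^ m * cos ((2 * m + 1 : ℕ) * z) := by
  have hI : I ^ (2 * m + 1) = (-1) ^ m * I := by rw [pow_succ, pow_mul, I_sq]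
  rw [zpow_neg, zpow_natCast, mul_pow, ← exp_nat_mul, hI, mul_inv, mul_inv, ← exp_neg, inv_I,
    ← inv_pow, inv_neg_one, cos]
  ring_nf

theorem cos_ratio_sum (N : ℕ) (hN : Odd N) (z : ℂ) (hz : Complex.cos z ≠ 0) :
    Complex.cos ((N : ℂ) * z) / Complex.cos z =
      (-1 : ℂ) ^ ((N - 1) / 2) *
        ∑ k ∈ Finset.range N,
          Complex.I ^ (2 * (k : ℤ) - ((N : ℤ) - 1)) *
            Complex.exp (-(Complex.I * ((2 * (k : ℂ) - ((N : ℂ) - 1)) * z))) := by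
  obtain ⟨m, rfl⟩ := hN
  have hx : I * exp (-(I * z)) ≠ 0 := mul_ne_zero I_ne_zero (exp_ne_zero _)
  have h_sub_inv : I * exp (-(I * z)) - (I * exp (-(I * z)))⁻¹ = 2 * I * cos z := by
    simpa only [mul_zero, zero_add, Nat.cast_one, zpow_one, zpow_neg, pow_zero, mul_one, one_mul]
      using I_mul_exp_zpow_sub_zpow_neg z 0
  have h_ne : I * exp (-(I * z)) - (I * exp (-(I * z)))⁻¹ ≠ 0 := by
    rw [h_sub_inv]; exact mul_ne_zero (mul_ne_zero two_ne_zero I_ne_zero) hz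
  rw [show (2 * m + 1 - 1) / 2 = m by omega]
  calc cos ((2 * m + 1 : ℕ) * z) / cos z
      = (-1) ^ m * ((2 * I * (-1) ^ m * cos ((2 * m + 1 : ℕ) * z)) / (2 * I * cos z)) := by
        field_simp
        rw [← pow_mul, pow_mul', neg_one_sq, one_pow, mul_one]
    _ = (-1) ^ m * ∑ k ∈ range (2 * m + 1),
          (I * exp (-(I * z))) ^ (2 * (k : ℤ) - (((2 * m + 1 : ℕ) : ℤ) - 1)) := by
        rw [← I_mul_exp_zpow_sub_zpow_neg, ← h_sub_inv, ← sub_inv_mul_sum_zpow hx,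
          mul_div_cancel_left₀ _ h_ne]
    _ = _ := by
        congr 1
        refine sum_congr rfl fun k _ => ?_
        rw [I_mul_exp_zpow]
        push_cast
        rfl
end

section
/- For any complex number z with cos(z) ≠ 0 and any even positive integer N, sin(Nz)/cos(z) = (-1)^(N/2) · Σ'' i^j exp(ijz), where the sum Σ'' is over j = -(N-1), -(N-3), ..., N-3, N-1. -/
/-!
With `u = i·exp(iz)` the summand `i^j exp(ijz)` is `u^j`, and the sum over `j = 1-N, 3-N, …, N-1`
telescopes after multiplication by `u - u⁻¹ = 2i cos z` to `u^N - u^(-N)`, which for even `N = 2M`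
equals `(-1)^M · 2i sin(Nz)`.
-/

open Complex Finset

theorem mul_sum_range_zpow_centered {K : Type*} [DivisionRing K] {u : K} (hu : u ≠ 0) (n : ℕ) :
    (u - u⁻¹) * ∑ k ∈ range n, u ^ (2 * (k : ℤ) - ((n : ℤ) - 1)) = u ^ (n : ℤ) - u ^ (-(n : ℤ)) := by
  have step (k : ℕ) : (u - u⁻¹) * u ^ (2 * (k : ℤ) - ((n : ℤ) - 1)) =
      u ^ (2 * ((k + 1 : ℕ) : ℤ) - n) - u ^ (2 * (k : ℤ) - n) := by
    rw [sub_mul, ← zpow_one_add₀ hu, ← zpow_neg_one, ← zpow_add₀ hu]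
    push_cast; ring_nf
  rw [mul_sum, sum_congr rfl fun k _ => step k, sum_range_sub (fun k => u ^ (2 * (k : ℤ) - n))]
  push_cast; ring_nf

theorem Complex.I_zpow_mul_exp (j : ℤ) (z : ℂ) :
    I ^ j * exp (I * (j * z)) = (I * exp (I * z)) ^ j := by
  rw [mul_zpow, ← exp_int_mul]; ring_nf

theorem Complex.I_mul_exp_sub_inv (z : ℂ) :
    I * exp (I * z) - (I * exp (I * z))⁻¹ = 2 * I * cos z := by
  rw [cos, mul_inv, inv_I, ← exp_neg]; ring_nf

theorem Complex.I_mul_exp_zpow_two_mul_sub (M : ℕ) (z : ℂ) :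
    (I * exp (I * z)) ^ ((2 * M : ℕ) : ℤ) - (I * exp (I * z)) ^ (-((2 * M : ℕ) : ℤ)) =
      (-1) ^ M * (2 * I * sin ((2 * M : ℕ) * z)) := by
  rw [zpow_neg, zpow_natCast, mul_pow, pow_mul, I_sq, ← exp_nat_mul, mul_inv, ← inv_pow, inv_neg_one,
    ← exp_neg, sin]
  ring_nf
  rw [I_sq]; ring

theorem Complex.cos_mul_sum_I_mul_exp_zpow (M : ℕ) (z : ℂ) :
    cos z * ∑ k ∈ range (2 * M), (I * exp (I * z)) ^ (2 * (k : ℤ) - (((2 * M : ℕ) : ℤ) - 1)) =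
      (-1) ^ M * sin ((2 * M : ℕ) * z) := by
  refine mul_left_cancel₀ (mul_ne_zero two_ne_zero I_ne_zero) ?_
  rw [← mul_assoc, ← I_mul_exp_sub_inv,
    mul_sum_range_zpow_centered (mul_ne_zero I_ne_zero (exp_ne_zero _)), I_mul_exp_zpow_two_mul_sub]
  ring

theorem sin_over_cos_sum_general (N : ℕ) (hN : Even N) (z : ℂ)
    (hz : Complex.cos z ≠ 0) :
    Complex.sin ((N : ℂ) * z) / Complex.cos z =
      (-1 : ℂ) ^ (N / 2) *
        ∑ k ∈ Finset.range N,
          Complex.I ^ (2 * (k : ℤ) - ((N : ℤ) - 1)) *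
            Complex.exp (Complex.I * ((2 * (k : ℂ) - ((N : ℂ) - 1)) * z)) := by
  obtain ⟨M, rfl⟩ := even_iff_two_dvd.mp hN
  have hterm (k : ℕ) : I ^ (2 * (k : ℤ) - (((2 * M : ℕ) : ℤ) - 1)) *
      exp (I * ((2 * (k : ℂ) - (((2 * M : ℕ) : ℂ) - 1)) * z)) =
      (I * exp (I * z)) ^ (2 * (k : ℤ) - (((2 * M : ℕ) : ℤ) - 1)) := by
    rw [← I_zpow_mul_exp]; push_cast; rfl
  have hsign : ((-1 : ℂ) ^ M) ^ 2 = 1 := by rw [← pow_mul, pow_mul', neg_one_sq, one_pow]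
  rw [sum_congr rfl fun k _ => hterm k, Nat.mul_div_cancel_left M two_pos, div_eq_iff hz]
  linear_combination -(-1) ^ M * cos_mul_sum_I_mul_exp_zpow M z - sin ((2 * M : ℕ) * z) * hsign

theorem sin_over_cos_sum (N : ℕ) (hN : Even N) (hNpos : 0 < N) (z : ℂ)
    (hz : Complex.cos z ≠ 0) :
    Complex.sin ((N : ℂ) * z) / Complex.cos z =
      (-1 : ℂ) ^ (N / 2) *
        ∑ k ∈ Finset.range N,
          Complex.I ^ (2 * (k : ℤ) - ((N : ℤ) - 1)) *
            Complex.exp (Complex.I * ((2 * (k : ℂ) - ((N : ℂ) - 1)) * z)) :=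
  sin_over_cos_sum_general N hN z hz
end
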